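/- Let G be a finite p-group of conjugate type {1, pⁿ}. Then every generating set of G has at least n elements; equivalently, the minimal number of generators of G is at least n. -/

import Mathlib

/-- The conjugacy class of `x` in a group. -/
def conjClass {G : Type*} [Group G] (x : G) : Set G := {y | ∃ g : G, g⁻¹ * x * g = y}

/-- `G` is of conjugate type `{1, m}`: every conjugacy class has size `1` or `m`,
and some class has size `m`. -/
def IsConjugateType (G : Type*) [Group G] (m : ℕ) : Prop :=
  (∀ x : G, Nat.card (conjClass x) = 1 ∨ Nat.card (conjClass x) = m) ∧
  (∃ x : G, Nat.card (conjClass x) = m)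

/-- `G` is a Camina group: the class of every `x ∉ G'` is the coset `xG'`. -/
def IsCamina (G : Type*) [Group G] : Prop :=
  ∀ x : G, x ∉ commutator G → conjClass x = (fun c => x * c) '' (commutator G : Set G)

open scoped commutatorElement in
/-- Two groups are isoclinic. -/
def Isoclinic (G H : Type*) [Group G] [Group H] : Prop :=
  ∃ (φ : (G ⧸ Subgroup.center G) ≃* (H ⧸ Subgroup.center H))
    (θ : (commutator G) ≃* (commutator H)),
    ∀ (x y : G) (x' y' : H),
      φ (QuotientGroup.mk x) = QuotientGroup.mk x' →
      φ (QuotientGroup.mk y) = QuotientGroup.mk y' →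
      (θ ⟨⁅x, y⁆, Subgroup.commutator_mem_commutator (Subgroup.mem_top x) (Subgroup.mem_top y)⟩ : H) = ⁅x', y'⁆

/-!
Choose `x ∉ Z(G)` whose image in `G ⧸ Z(G)` is central of order `p`; it exists because
`G ⧸ Z(G)` is a nontrivial `p`-group once a class of size `p ^ n > 1` makes `G` nonabelian.
Then `g ↦ ⁅g, x⁆` is a homomorphism `G →* Z(G)` with kernel `C_G(x)` and values of order
dividing `p`. Its image is an abelian group generated by the images of a generating set `S`,
so it has at most `p ^ #S` elements, while it has `|G : C_G(x)| = |x^G| = p ^ n` elements.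
-/

open Subgroup
open scoped commutatorElement Pointwise IsMulCommutative

section Group

variable {G : Type*} [Group G]

theorem card_conjClass_eq_index_centralizer (x : G) :
    Nat.card (conjClass x) = (centralizer {x}).index := by
  have horbit : conjClass x = MulAction.orbit (ConjAct G) x := by
    ext y
    rw [ConjAct.mem_orbit_conjAct, isConj_comm, isConj_iff]
    exact ⟨fun ⟨g, hg⟩ => ⟨g⁻¹, by rw [inv_inv, hg]⟩, fun ⟨g, hg⟩ => ⟨g⁻¹, by rw [inv_inv, hg]⟩⟩
  rw [horbit, Nat.card_coe_set_eq, ← MulAction.index_stabilizer,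
    centralizer_eq_comap_stabilizer]
  exact (index_comap_of_surjective _ ConjAct.toConjAct.surjective).symm

theorem card_conjClass_eq_one_iff {x : G} :
    Nat.card (conjClass x) = 1 ↔ x ∈ center G := by
  rw [card_conjClass_eq_index_centralizer, index_eq_one,
    centralizer_eq_top_iff_subset, Set.singleton_subset_iff, SetLike.mem_coe]

theorem Subgroup.mem_upperCentralSeries_two_iff {x : G} :
    x ∈ Subgroup.upperCentralSeries G 2 ↔ (x : G ⧸ center G) ∈ center (G ⧸ center G) := by
  rw [Subgroup.mem_upperCentralSeries_succ_iff, Subgroup.upperCentralSeries_one, mem_center_iff,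
    QuotientGroup.forall_mk]
  refine forall_congr' fun y => ?_
  rw [← QuotientGroup.eq_one_iff, ← QuotientGroup.mk'_apply, map_commutatorElement,
    commutatorElement_eq_one_iff_mul_comm, eq_comm]
  rfl

theorem IsPGroup.exists_mem_upperCentralSeries_two_of_center_ne_top {p : ℕ} [Fact p.Prime]
    [Finite G] (hG : IsPGroup p G) (hZ : center G ≠ ⊤) :
    ∃ x ∈ Subgroup.upperCentralSeries G 2, x ∉ center G ∧ x ^ p ∈ center G := by
  have : Nontrivial (G ⧸ center G) := QuotientGroup.nontrivial_iff.mpr hZ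
  have := (hG.to_quotient (center G)).center_nontrivial
  obtain ⟨a, ha⟩ := exists_prime_orderOf_dvd_card' (G := center (G ⧸ center G)) p
    ((((hG.to_quotient _).to_subgroup _).card_eq_or_dvd).resolve_left Finite.one_lt_card.ne')
  obtain ⟨x, hx⟩ := QuotientGroup.mk_surjective (a : G ⧸ center G)
  refine ⟨x, mem_upperCentralSeries_two_iff.mpr (hx ▸ a.2), fun hxZ => ?_, ?_⟩
  · have : a = 1 := Subtype.ext (hx ▸ (QuotientGroup.eq_one_iff x).mpr hxZ)
    exact (Fact.out : p.Prime).one_lt.ne' (ha ▸ this ▸ orderOf_one)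
  · rw [← QuotientGroup.eq_one_iff, QuotientGroup.mk_pow, hx, ← coe_pow, ← ha, pow_orderOf_eq_one,
      OneMemClass.coe_one]

variable {x : G}

theorem commutatorElement_mem_center (hx : x ∈ Subgroup.upperCentralSeries G 2) (g : G) :
    ⁅g, x⁆ ∈ center G := by
  rw [← commutatorElement_inv, ← Subgroup.upperCentralSeries_one]
  exact inv_mem (Subgroup.mem_upperCentralSeries_succ_iff.mp hx g)

def centralCommutatorHom (hx : x ∈ Subgroup.upperCentralSeries G 2) : G →* center G where
  toFun g := ⟨⁅g, x⁆, commutatorElement_mem_center hx g⟩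
  map_one' := Subtype.ext (commutatorElement_one_left x)
  map_mul' g h := by
    have hc := mem_center_iff.mp (commutatorElement_mem_center hx h)
    ext
    calc ⁅g * h, x⁆ = g * ⁅h, x⁆ * (x * g⁻¹ * x⁻¹) := by group
      _ = ⁅h, x⁆ * ⁅g, x⁆ := by rw [hc g]; group
      _ = ⁅g, x⁆ * ⁅h, x⁆ := (hc _).symm

@[simp]
theorem coe_centralCommutatorHom_apply (hx : x ∈ Subgroup.upperCentralSeries G 2) (g : G) :
    (centralCommutatorHom hx g : G) = ⁅g, x⁆ := rfl

theorem ker_centralCommutatorHom (hx : x ∈ Subgroup.upperCentralSeries G 2) :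
    (centralCommutatorHom hx).ker = centralizer {x} := by
  ext g
  rw [MonoidHom.mem_ker, mem_centralizer_singleton_iff, ← OneMemClass.coe_eq_one,
    coe_centralCommutatorHom_apply, commutatorElement_eq_one_iff_mul_comm]

theorem centralCommutatorHom_pow_eq_one (hx : x ∈ Subgroup.upperCentralSeries G 2) {m : ℕ}
    (hxm : x ^ m ∈ center G) (g : G) : centralCommutatorHom hx g ^ m = 1 := by
  rw [← OneMemClass.coe_eq_one, coe_pow, coe_centralCommutatorHom_apply]
  have hconj : g * x * g⁻¹ = ⁅g, x⁆ * x := by group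
  have hcomm : Commute ⁅g, x⁆ x := (mem_center_iff.mp (commutatorElement_mem_center hx g) x).symm
  refine (mul_eq_right (b := x ^ m)).mp ?_
  calc ⁅g, x⁆ ^ m * x ^ m = g * x ^ m * g⁻¹ := by rw [← hcomm.mul_pow, ← hconj, conj_pow]
    _ = x ^ m := by rw [mem_center_iff.mp hxm g, mul_inv_cancel_right]

end Group

section Counting

variable {A : Type*} [CommGroup A]

theorem Subgroup.card_closure_le_prod_orderOf (T : Finset A) :
    Nat.card (closure (T : Set A)) ≤ ∏ a ∈ T, orderOf a := by
  classical
  induction T using Finset.induction_on with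
  | empty => simp
  | insert a T haT ih =>
    rw [Finset.coe_insert, Set.insert_eq, closure_union, Finset.prod_insert haT,
      ← zpowers_eq_closure, ← Nat.card_zpowers a]
    calc Nat.card ↥(zpowers a ⊔ closure (T : Set A))
        = Nat.card ↥((zpowers a : Set A) * (closure (T : Set A) : Set A)) := by
          rw [← mul_normal]; rfl
      _ ≤ Nat.card (zpowers a) * Nat.card (closure (T : Set A)) := Set.natCard_mul_le
      _ ≤ Nat.card (zpowers a) * ∏ b ∈ T, orderOf b := Nat.mul_le_mul_left _ ih

theorem MonoidHom.card_range_le_pow_card {G : Type*} [Group G] (φ : G →* A) {p : ℕ} (hp : 0 < p)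
    (hφ : ∀ g, φ g ^ p = 1) {S : Finset G} (hS : Subgroup.closure (S : Set G) = ⊤) :
    Nat.card φ.range ≤ p ^ S.card := by
  classical
  have hrange : φ.range = closure ((S.image φ : Finset A) : Set A) := by
    rw [Finset.coe_image, ← MonoidHom.map_closure, hS, MonoidHom.range_eq_map]
  calc Nat.card φ.range ≤ ∏ a ∈ S.image φ, orderOf a :=
        hrange ▸ card_closure_le_prod_orderOf _
    _ ≤ p ^ (S.image φ).card := Finset.prod_le_pow_card _ _ _ fun a ha => by
        obtain ⟨g, -, rfl⟩ := Finset.mem_image.mp ha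
        exact Nat.le_of_dvd hp (orderOf_dvd_of_pow_eq_one (hφ g))
    _ ≤ p ^ S.card := Nat.pow_le_pow_right hp Finset.card_image_le

end Counting

theorem generators_lower_bound_general {p n : ℕ} [Fact p.Prime]
    {G : Type*} [Group G] [Finite G] (hG : IsPGroup p G)
    (ht : IsConjugateType G (p ^ n)) :
    ∀ S : Finset G, Subgroup.closure (S : Set G) = ⊤ → n ≤ S.card := by
  intro S hS
  have hp : p.Prime := Fact.out
  rcases n.eq_zero_or_pos with rfl | hn
  · exact Nat.zero_le _
  have hpn : p ^ n ≠ 1 := (Nat.one_lt_pow hn.ne' hp.one_lt).ne'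
  obtain ⟨x₀, hx₀⟩ := ht.2
  have hnoncomm : center G ≠ ⊤ := fun h =>
    hpn (hx₀ ▸ card_conjClass_eq_one_iff.mpr (h ▸ mem_top x₀))
  obtain ⟨x, hx, hxZ, hxp⟩ := hG.exists_mem_upperCentralSeries_two_of_center_ne_top hnoncomm
  have hclass : (centralizer {x}).index = p ^ n := by
    rw [← card_conjClass_eq_index_centralizer]
    exact (ht.1 x).resolve_left (mt card_conjClass_eq_one_iff.mp hxZ)
  rw [← Nat.pow_le_pow_iff_right hp.one_lt, ← hclass, ← ker_centralCommutatorHom hx,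
    index_ker]
  exact (centralCommutatorHom hx).card_range_le_pow_card hp.pos
    (centralCommutatorHom_pow_eq_one hx hxp) hS

/-- A finite p-group of conjugate type {1, pⁿ} needs at least n generators. -/
theorem generators_lower_bound {p n : ℕ} [Fact p.Prime] (hn : 1 ≤ n)
    {G : Type*} [Group G] [Finite G] (hG : IsPGroup p G)
    (ht : IsConjugateType G (p ^ n)) :
    ∀ S : Finset G, Subgroup.closure (S : Set G) = ⊤ → n ≤ S.card :=
  generators_lower_bound_general hG ht
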